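/- Let G be a finitely generated group with a recursively enumerable presentation ⟨S | R⟩, and suppose G is just infinite. Then the word problem for G is decidable. -/

import Mathlib

def JustInfinite (G : Type*) [Group G] : Prop :=
  Infinite G ∧ ∀ N : Subgroup G, N.Normal → N ≠ ⊥ → Finite (G ⧸ N)

/-!
Membership in `N = ⟪R⟫` is r.e.: `w ∈ N` iff `w` is a product of conjugates of relators and
their inverses, and such certificates can be enumerated. Non-membership is r.e. as well: as
`F ⧸ N` is just infinite, `w ∉ N` iff `F ⧸ ⟪R ∪ {w}⟫` is finite (the image of `w` generates a
nontrivial normal subgroup), and finiteness of `F ⧸ M` is witnessed by a finite list of words, one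
of them in `M`, whose cosets are permuted by left multiplication with the letters; checking such a
witness only needs an enumeration of `M`. Post's theorem then decides membership.
-/

open FreeGroup Subgroup

theorem Monotone.eventually_atTop_eq_true {u : ℕ → Bool} (hu : Monotone u) (h : ∃ n, u n = true) :
    ∀ᶠ n in Filter.atTop, u n = true := by
  obtain ⟨n, hn⟩ := h
  exact Filter.eventually_atTop.2 ⟨n, fun m hm => Bool.le_iff_imp.1 (hu hm) hn⟩

section REPredClosure

variable {α β : Type*} [Primcodable α] [Primcodable β]

theorem REPred.comp {p : β → Prop} (hp : REPred p) {g : α → β} (hg : Computable g) :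
    REPred fun a => p (g a) :=
  Partrec.comp hp hg

theorem REPred.of_exists_computable {p : α → Prop} {f : α → ℕ → Bool} (hf : Computable₂ f)
    (h : ∀ a, p a ↔ ∃ n, f a n = true) : REPred p :=
  (Partrec.rfind hf.partrec₂).dom_re.of_eq fun a => by
    rw [h]; simp [Nat.rfind_dom]

open Nat.Partrec Code in
theorem REPred.exists_primrec_stages {p : α → Prop} (hp : REPred p) :
    ∃ f : α → ℕ → Bool, Primrec₂ f ∧ (∀ a, Monotone (f a)) ∧ ∀ a, p a ↔ ∃ n, f a n = true := by
  obtain ⟨c, hc⟩ := exists_code.1 hp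
  have hdom : ∀ a, p a ↔ (eval c (Encodable.encode a)).Dom := fun a => by
    simp [hc, Encodable.encodek, Part.assert]
  refine ⟨fun a n => (evaln n c (Encodable.encode a)).isSome, ?_, ?_, fun a => ?_⟩
  · exact Primrec.option_isSome.comp <| primrec_evaln.comp <|
      (Primrec.snd.pair (Primrec.const c)).pair (Primrec.encode.comp Primrec.fst)
  · intro a m n hmn
    refine Bool.le_iff_imp.2 fun hm => ?_
    obtain ⟨x, hx⟩ := Option.isSome_iff_exists.1 hm
    exact Option.isSome_iff_exists.2 ⟨x, evaln_mono hmn hx⟩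
  · simp only [hdom, Part.dom_iff_mem, evaln_complete, Option.isSome_iff_exists, Option.mem_def]
    exact ⟨fun ⟨x, n, hn⟩ => ⟨n, x, hn⟩, fun ⟨n, x, hn⟩ => ⟨x, n, hn⟩⟩

theorem REPred.or {p q : α → Prop} (hp : REPred p) (hq : REPred q) :
    REPred fun a => p a ∨ q a := by
  obtain ⟨f, hf, -, hpf⟩ := hp.exists_primrec_stages
  obtain ⟨g, hg, -, hqg⟩ := hq.exists_primrec_stages
  refine REPred.of_exists_computable (f := fun a n => f a n || g a n)
    (Primrec.or.comp₂ hf hg).to_comp fun a => ?_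
  simp only [hpf, hqg, Bool.or_eq_true, exists_or]

theorem REPred.and {p q : α → Prop} (hp : REPred p) (hq : REPred q) :
    REPred fun a => p a ∧ q a := by
  obtain ⟨f, hf, hfm, hpf⟩ := hp.exists_primrec_stages
  obtain ⟨g, hg, hgm, hqg⟩ := hq.exists_primrec_stages
  refine REPred.of_exists_computable (f := fun a n => f a n && g a n)
    (Primrec.and.comp₂ hf hg).to_comp fun a => ?_
  simp only [hpf, hqg, Bool.and_eq_true]
  refine ⟨fun ⟨hp, hq⟩ => ?_, fun ⟨n, hfn, hgn⟩ => ⟨⟨n, hfn⟩, n, hgn⟩⟩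
  exact (((hfm a).eventually_atTop_eq_true hp).and ((hgm a).eventually_atTop_eq_true hq)).exists

theorem REPred.exists {p : α → β → Prop} (hp : REPred fun x : α × β => p x.1 x.2) :
    REPred fun a => ∃ b, p a b := by
  obtain ⟨f, hf, -, hpf⟩ := hp.exists_primrec_stages
  replace hpf : ∀ a b, p a b ↔ ∃ n, f (a, b) n = true := fun a b => hpf (a, b)
  refine REPred.of_exists_computable
    (f := fun a n => (Encodable.decode n : Option (β × ℕ)).casesOn false fun bm => f (a, bm.1) bm.2)
    (Computable.option_casesOn (Computable.decode.comp Computable.snd) (Computable.const false)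
      (hf.to_comp.comp (Computable.pair (Computable.fst.comp Computable.fst)
        (Computable.fst.comp Computable.snd)) (Computable.snd.comp Computable.snd)).to₂) fun a => ?_
  simp only [hpf]
  constructor
  · rintro ⟨b, n, hn⟩
    exact ⟨Encodable.encode (b, n), by simpa [Encodable.encodek] using hn⟩
  · rintro ⟨n, hn⟩
    rcases hd : (Encodable.decode n : Option (β × ℕ)) with - | ⟨b, m⟩ <;> rw [hd] at hn
    · exact absurd hn Bool.false_ne_true
    · exact ⟨b, m, hn⟩

theorem REPred.exists_mem_list {l : α → List β} (hl : Computable l) {p : α → β → Prop}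
    (hp : REPred fun x : α × β => p x.1 x.2) : REPred fun a => ∃ b ∈ l a, p a b := by
  obtain ⟨f, hf, -, hpf⟩ := hp.exists_primrec_stages
  replace hpf : ∀ a b, p a b ↔ ∃ n, f (a, b) n = true := fun a b => hpf (a, b)
  have hR : PrimrecRel fun (b : β) (an : α × ℕ) => f (an.1, b) an.2 = true :=
    Primrec.eq.comp (hf.comp (Primrec.pair (Primrec.fst.comp Primrec.snd) Primrec.fst)
      (Primrec.snd.comp Primrec.snd)) (Primrec.const true)
  refine REPred.of_exists_computable (f := fun a n => decide (∃ b ∈ l a, f (a, b) n = true))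
    ((hR.exists_mem_list.decide.to_comp.comp (hl.comp Computable.fst) Computable.id).of_eq
      fun _ => rfl).to₂ fun a => ?_
  simp only [hpf, decide_eq_true_eq]
  exact ⟨fun ⟨b, hb, n, hn⟩ => ⟨n, b, hb, hn⟩, fun ⟨n, b, hb, hn⟩ => ⟨b, hb, n, hn⟩⟩

theorem REPred.forall_mem_list {l : α → List β} (hl : Computable l) {p : α → β → Prop}
    (hp : REPred fun x : α × β => p x.1 x.2) : REPred fun a => ∀ b ∈ l a, p a b := by
  obtain ⟨f, hf, hfm, hpf⟩ := hp.exists_primrec_stages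
  replace hpf : ∀ a b, p a b ↔ ∃ n, f (a, b) n = true := fun a b => hpf (a, b)
  have hR : PrimrecRel fun (b : β) (an : α × ℕ) => f (an.1, b) an.2 = true :=
    Primrec.eq.comp (hf.comp (Primrec.pair (Primrec.fst.comp Primrec.snd) Primrec.fst)
      (Primrec.snd.comp Primrec.snd)) (Primrec.const true)
  refine REPred.of_exists_computable (f := fun a n => decide (∀ b ∈ l a, f (a, b) n = true))
    ((hR.forall_mem_list.decide.to_comp.comp (hl.comp Computable.fst) Computable.id).of_eq
      fun _ => rfl).to₂ fun a => ?_
  simp only [hpf, decide_eq_true_eq]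
  refine ⟨fun h => ?_, fun ⟨n, hn⟩ b hb => ⟨n, hn b hb⟩⟩
  have hev : ∀ b ∈ {b | b ∈ l a}, ∀ᶠ n in Filter.atTop, f (a, b) n = true :=
    fun b hb => (hfm (a, b)).eventually_atTop_eq_true (h b hb)
  exact ((Filter.eventually_all_finite (l a).finite_toSet).2 hev).exists

theorem REPred.forall_fintype [Fintype β] {p : α → β → Prop}
    (hp : REPred fun x : α × β => p x.1 x.2) :
    REPred fun a => ∀ b, p a b :=
  (REPred.forall_mem_list (Computable.const Finset.univ.toList) hp).of_eq fun a => by simp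

end REPredClosure

theorem Subgroup.mem_normalClosure_iff_exists_list {G : Type*} [Group G] {S : Set G} {g : G} :
    g ∈ normalClosure S ↔
      ∃ L : List G, (∀ x ∈ L, ∃ c, ∃ r ∈ S, c * r * c⁻¹ = x ∨ c * r * c⁻¹ = x⁻¹) ∧ L.prod = g := by
  have hgen : (normalClosure S).toSubmonoid =
      Submonoid.closure {x | ∃ c, ∃ r ∈ S, c * r * c⁻¹ = x ∨ c * r * c⁻¹ = x⁻¹} := by
    rw [normalClosure, closure_toSubmonoid]
    congr 1
    ext x
    simp only [Set.mem_union, Set.mem_inv, Group.mem_conjugatesOfSet_iff, isConj_iff,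
      Set.mem_ofPred_eq]
    aesop
  rw [← mem_toSubmonoid, hgen, ← SetLike.mem_coe, Submonoid.closure_eq_image_prod]
  rfl

-- Left multiplication by the generators, since `G ⧸ H` is the space of left cosets.
theorem Subgroup.finite_quotient_iff_exists_coset_table {G ι : Type*} [Group G] (H : Subgroup G)
    {X : Set G} (hX : Submonoid.closure X = ⊤) {e : ι → G} (he : Function.Surjective e) :
    Finite (G ⧸ H) ↔
      ∃ T : List ι, (∃ t ∈ T, e t ∈ H) ∧ ∀ t ∈ T, ∀ x ∈ X, ∃ t' ∈ T, (x * e t)⁻¹ * e t' ∈ H := by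
  constructor
  · intro hfin
    have := Fintype.ofFinite (G ⧸ H)
    have hs : Function.Surjective fun i => (e i : G ⧸ H) := QuotientGroup.mk_surjective.comp he
    refine ⟨Finset.univ.toList.map (Function.surjInv hs),
      ⟨Function.surjInv hs (1 : G), by simp, ?_⟩,
      fun t _ x _ => ⟨Function.surjInv hs (x * e t : G), by simp, ?_⟩⟩
    · simpa using QuotientGroup.eq.1 (Function.surjInv_eq hs (1 : G)).symm
    · exact QuotientGroup.eq.1 (Function.surjInv_eq hs _).symm
  · rintro ⟨T, ⟨t₀, ht₀, h₀⟩, hT⟩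
    have hcover : ∀ g : G, ∃ t ∈ T, (g : G ⧸ H) = e t := by
      intro g
      induction g using Submonoid.induction_of_closure_eq_top_left hX with
      | one => exact ⟨t₀, ht₀, QuotientGroup.eq.2 (by simpa using h₀)⟩
      | mul_left x hx g ih =>
        obtain ⟨t, ht, hgt⟩ := ih
        obtain ⟨t', ht', hxt⟩ := hT t ht x hx
        refine ⟨t', ht', QuotientGroup.eq.2 ?_⟩
        have hg : g⁻¹ * e t ∈ H := QuotientGroup.eq.1 hgt
        simpa [mul_assoc] using H.mul_mem hg hxt
    refine Set.finite_univ_iff.1 ((T.finite_toSet.image fun t => (e t : G ⧸ H)).subset ?_)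
    rintro q -
    obtain ⟨g, rfl⟩ := QuotientGroup.mk_surjective q
    obtain ⟨t, ht, hgt⟩ := hcover g
    exact ⟨t, ht, hgt.symm⟩

theorem JustInfinite.notMem_normalClosure_iff_finite {G : Type*} [Group G] {R : Set G}
    (h : JustInfinite (G ⧸ normalClosure R)) (g : G) :
    g ∉ normalClosure R ↔ Finite (G ⧸ normalClosure (insert g R)) := by
  have hle : normalClosure R ≤ normalClosure (insert g R) :=
    normalClosure_mono (Set.subset_insert g R)
  constructor
  · intro hg
    have hne : (normalClosure (insert g R)).map (QuotientGroup.mk' (normalClosure R)) ≠ ⊥ := by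
      refine ne_bot_iff_exists_ne_one.2
        ⟨⟨_, g, subset_normalClosure (Set.mem_insert g R), rfl⟩, ?_⟩
      simpa using hg
    have := h.2 _ inferInstance hne
    exact Finite.of_equiv _ (QuotientGroup.quotientQuotientEquivQuotient _ _ hle).toEquiv
  · intro hfin hg
    have heq : normalClosure (insert g R) = normalClosure R :=
      le_antisymm (normalClosure_le_normal (Set.insert_subset hg subset_normalClosure)) hle
    exact not_finite_iff_infinite.2 h.1 (heq ▸ hfin)

namespace FreeGroup

variable {α : Type*}

theorem mk_surjective : Function.Surjective (mk : List (α × Bool) → FreeGroup α) :=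
  Quot.mk_surjective

theorem prod_map_mk (L : List (List (α × Bool))) : (L.map mk).prod = mk L.flatten := by
  induction L with
  | nil => rfl
  | cons u L ih => rw [List.map_cons, List.prod_cons, ih, mul_mk, List.flatten_cons]

theorem submonoid_closure_range_mk_singleton :
    Submonoid.closure (Set.range fun x : α × Bool => mk [x]) = ⊤ := by
  rw [eq_top_iff]
  rintro g -
  obtain ⟨w, rfl⟩ := mk_surjective g
  induction w with
  | nil => exact Submonoid.one_mem _
  | cons x w ih => exact Submonoid.mul_mem _ (Submonoid.subset_closure (Set.mem_range_self x)) ih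

theorem mem_normalClosure_iff_exists_words {S : Set (FreeGroup α)} {w : List (α × Bool)} :
    mk w ∈ normalClosure S ↔
      ∃ L : List (List (α × Bool)),
        (∀ u ∈ L, ∃ c r, mk r ∈ S ∧
          (mk (c ++ r ++ invRev c) = mk u ∨ mk (c ++ r ++ invRev c) = mk (invRev u))) ∧
        mk L.flatten = mk w := by
  simp only [mem_normalClosure_iff_exists_list, mk_surjective.list_map.exists, List.forall_mem_map,
    mk_surjective.exists, prod_map_mk, inv_mk, mul_mk]

theorem finite_quotient_iff_exists_coset_table (H : Subgroup (FreeGroup α)) :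
    Finite (FreeGroup α ⧸ H) ↔
      ∃ T : List (List (α × Bool)), (∃ t ∈ T, mk t ∈ H) ∧
        ∀ t ∈ T, ∀ x : α × Bool, ∃ t' ∈ T, mk (invRev (x :: t) ++ t') ∈ H := by
  rw [H.finite_quotient_iff_exists_coset_table submonoid_closure_range_mk_singleton mk_surjective]
  simp only [Set.forall_mem_range]
  rfl

section Computability

variable [Primcodable α]

theorem primrec_invRev : Primrec (invRev : List (α × Bool) → List (α × Bool)) :=
  Primrec.list_reverse.comp <| Primrec.list_map .id
    ((Primrec.fst.comp .snd).pair (Primrec.not.comp (Primrec.snd.comp .snd))).to₂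

theorem primrec_reduce [DecidableEq α] : Primrec (reduce : List (α × Bool) → List (α × Bool)) := by
  let step : (α × Bool) × List (α × Bool) → List (α × Bool) := fun p =>
    List.casesOn p.2 [p.1] fun hd tl =>
      if p.1.1 = hd.1 ∧ p.1.2 = !hd.2 then tl else p.1 :: hd :: tl
  have hcond : PrimrecPred fun p : ((α × Bool) × List (α × Bool)) × (α × Bool) × List (α × Bool) =>
      p.1.1.1 = p.2.1.1 ∧ p.1.1.2 = !p.2.1.2 :=
    .and (Primrec.eq.comp (Primrec.fst.comp (Primrec.fst.comp .fst))
        (Primrec.fst.comp (Primrec.fst.comp .snd)))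
      (Primrec.eq.comp (Primrec.snd.comp (Primrec.fst.comp .fst))
        (Primrec.not.comp (Primrec.snd.comp (Primrec.fst.comp .snd))))
  have hstep : Primrec step :=
    Primrec.list_casesOn (f := fun p : (α × Bool) × List (α × Bool) => p.2) (g := fun p => [p.1])
      (h := fun p q => if p.1.1 = q.1.1 ∧ p.1.2 = !q.1.2 then q.2 else p.1 :: q.1 :: q.2)
      Primrec.snd (Primrec.list_cons.comp .fst (.const []))
      (Primrec.ite hcond (Primrec.snd.comp .snd) (Primrec.list_cons.comp (Primrec.fst.comp .fst)
        (Primrec.list_cons.comp (Primrec.fst.comp .snd) (Primrec.snd.comp .snd)))).to₂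
  have hfold : Primrec fun L : List (α × Bool) => L.foldr (fun x r => step (x, r)) [] :=
    Primrec.list_foldr .id (.const []) (hstep.comp .snd).to₂
  refine hfold.of_eq fun L => ?_
  induction L with
  | nil => rfl
  | cons x L ih => rw [List.foldr_cons, ih]; rfl

theorem primrecRel_mk_eq_mk [DecidableEq α] :
    PrimrecRel fun u v : List (α × Bool) => mk u = mk v :=
  (Primrec.eq.comp (primrec_reduce.comp .fst) (primrec_reduce.comp .snd)).of_eq
    fun _ => by rw [← toWord_mk, ← toWord_mk, toWord_inj]

end Computability

end FreeGroup

section FreeGroupRE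

open Primrec

variable {α β : Type*} [Primcodable α] [Primcodable β]

theorem REPred.mem_normalClosure [DecidableEq β] {S : α → Set (FreeGroup β)}
    (hS : REPred fun x : α × List (β × Bool) => mk x.2 ∈ S x.1) :
    REPred fun x : α × List (β × Bool) => mk x.2 ∈ normalClosure (S x.1) := by
  refine REPred.of_eq ?_ fun x => mem_normalClosure_iff_exists_words.symm
  refine REPred.exists (REPred.and (REPred.forall_mem_list Computable.snd ?_) ?_)
  · refine REPred.exists (REPred.exists (REPred.and ?_ ?_))
    · refine (hS.comp (g := fun x => (x.1.1.1.1.1, x.2)) ?_).of_eq fun _ => Iff.rfl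
      exact Primrec.to_comp <| (fst.comp <| fst.comp <| fst.comp <| fst.comp fst).pair snd
    · have hconj : Primrec fun x : ((((α × List (β × Bool)) × List (List (β × Bool))) ×
          List (β × Bool)) × List (β × Bool)) × List (β × Bool) => x.1.2 ++ x.2 ++ invRev x.1.2 :=
        list_append.comp (list_append.comp (snd.comp fst) snd) (primrec_invRev.comp (snd.comp fst))
      refine ComputablePred.to_re (PrimrecPred.computablePred (.or ?_ ?_))
      · exact primrecRel_mk_eq_mk.comp hconj (snd.comp (fst.comp fst))
      · exact primrecRel_mk_eq_mk.comp hconj (primrec_invRev.comp (snd.comp (fst.comp fst)))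
  · refine ComputablePred.to_re (PrimrecPred.computablePred ?_)
    exact primrecRel_mk_eq_mk.comp (list_flatten.comp snd) (snd.comp fst)

theorem REPred.finite_quotient [Fintype β] {H : α → Subgroup (FreeGroup β)}
    (hH : REPred fun x : α × List (β × Bool) => mk x.2 ∈ H x.1) :
    REPred fun a => Finite (FreeGroup β ⧸ H a) := by
  refine REPred.of_eq ?_ fun a => (FreeGroup.finite_quotient_iff_exists_coset_table (H a)).symm
  refine REPred.exists (REPred.and (REPred.exists_mem_list Computable.snd ?_)
    (REPred.forall_mem_list Computable.snd (REPred.forall_fintype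
      (REPred.exists_mem_list (Computable.snd.comp (Computable.fst.comp Computable.fst)) ?_))))
  · refine (hH.comp (g := fun x => (x.1.1, x.2)) ?_).of_eq fun _ => Iff.rfl
    exact Primrec.to_comp <| (fst.comp fst).pair snd
  · refine (hH.comp (g := fun x => (x.1.1.1.1, invRev (x.1.2 :: x.1.1.2) ++ x.2)) ?_).of_eq
      fun _ => Iff.rfl
    exact (Primrec.to_comp <| (fst.comp <| fst.comp <| fst.comp fst).pair <| list_append.comp
        (primrec_invRev.comp (list_cons.comp (snd.comp fst) (snd.comp (fst.comp fst)))) snd)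

end FreeGroupRE

/-- Main theorem: a finitely generated, recursively presented just infinite group
has decidable word problem. -/
theorem stmt_9 {k : ℕ} (R : Set (FreeGroup (Fin k)))
    (hR : REPred (fun w : List (Fin k × Bool) => FreeGroup.mk w ∈ R))
    (hji : JustInfinite (FreeGroup (Fin k) ⧸ Subgroup.normalClosure R)) :
    ComputablePred (fun w : List (Fin k × Bool) =>
      FreeGroup.mk w ∈ Subgroup.normalClosure R) := by
  have hmem : REPred fun w : List (Fin k × Bool) => mk w ∈ normalClosure R :=
    (REPred.mem_normalClosure (S := fun _ : Unit => R)
      (hR.comp (g := Prod.snd) Computable.snd)).comp (g := fun w => ((), w))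
      ((Computable.const ()).pair Computable.id)
  have hinsert : REPred fun x : List (Fin k × Bool) × List (Fin k × Bool) =>
      mk x.2 ∈ insert (mk x.1) R :=
    (((primrecRel_mk_eq_mk (α := Fin k)).comp Primrec.snd Primrec.fst).computablePred.to_re.or
      (hR.comp (g := Prod.snd) Computable.snd)).of_eq fun _ => Set.mem_insert_iff.symm
  have hnotMem : REPred fun w : List (Fin k × Bool) => mk w ∉ normalClosure R :=
    (REPred.finite_quotient (H := fun w => normalClosure (insert (mk w) R))
      (REPred.mem_normalClosure (S := fun w => insert (mk w) R) hinsert)).of_eq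
      fun w => (hji.notMem_normalClosure_iff_finite (mk w)).symm
  exact ComputablePred.computable_iff_re_compl_re'.2 ⟨hmem, hnotMem⟩
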